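/- Let E be a real inner product space, n ≥ 1, and for each i ∈ Fin n let fᵢ : E → ℝ be differentiable, μᵢ-strongly convex (μᵢ > 0), and with Lᵢ-Lipschitz gradient. Set L = ∑ᵢ Lᵢ, μ = minᵢ μᵢ, assume 0 < μ ≤ L, and assume F = ∑ᵢ fᵢ is μ-strongly convex and has L-Lipschitz gradient, with ∇F(x*) = 0. Let Δ ≥ 0 and 0 < α ≤ 2n/(μ + L). Suppose sequences x̂ : ℕ → E, xᵢ : ℕ → E, and e : ℕ → E satisfy, for all k: x̂[k+1] = x̂[k] − (α/n)·∑ᵢ ∇fᵢ(xᵢ[k]) + e[k+1], ‖e[k+1]‖ ≤ 2Δ, and ‖xᵢ[k] − x̂[k]‖ ≤ 4Δ for all i. Then limsup_{k→∞} ‖x̂[k] − x*‖ ≤ (n/(αμ))·(4αL/n + 2)·Δ. -/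

import Mathlib

open RealInnerProductSpace Filter

/-! With `η = α / n` the recursion is an inexact gradient step on `F`:
`x̂[k+1] - x* = (x̂[k] - η ∇F(x̂[k]) - x*) + η (∇F(x̂[k]) - ∑ᵢ ∇fᵢ(xᵢ[k])) + e[k+1]`.
Since `∇F - μ • id` is the gradient of the convex function `F - μ/2 ‖·‖²`, whose gradient is
`(L - μ)`-Lipschitz, it is co-coercive, and for `η (μ + L) ≤ 2` this makes the exact gradient step a
`(1 - η μ)`-contraction. The local Lipschitz bounds and the consensus error bound the gradient error
by `4 L Δ`, so `rₖ = ‖x̂[k] - x*‖` satisfies `rₖ₊₁ ≤ (1 - η μ) rₖ + 4 η L Δ + 2 Δ`, and its limsup is at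
most `(4 η L Δ + 2 Δ) / (η μ)`. -/

theorem le_mul_of_forall_two_mul_sub_mul_sq_mul_le {K X Y : ℝ} (hK : 0 ≤ K)
    (h : ∀ s, (2 * s - K * s ^ 2) * X ≤ Y) : X ≤ K * Y := by
  rcases hK.eq_or_lt with rfl | hK
  · by_contra! hXY
    have hX : 0 < X := by linarith
    have := h ((|Y| + 1) / (2 * X))
    rw [zero_mul, sub_zero] at this
    field_simp at this
    linarith [le_abs_self Y]
  · have := h K⁻¹
    field_simp at this
    linarith

section Cocoercive

variable {E : Type*} [NormedAddCommGroup E] [InnerProductSpace ℝ E] {G : E → ℝ} {g : E → E} {K : ℝ}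

theorem add_inner_add_mul_norm_sq_le
    (hconv : ∀ a b, G a + ⟪g a, b - a⟫ ≤ G b)
    (hupper : ∀ a b, G b ≤ G a + ⟪g a, b - a⟫ + K / 2 * ‖b - a‖ ^ 2) (s : ℝ) (a b : E) :
    G a + ⟪g a, b - a⟫ + (s - K / 2 * s ^ 2) * ‖g b - g a‖ ^ 2 ≤ G b := by
  set u := g b - g a
  have h₁ := hconv a (b - s • u)
  have h₂ := hupper b (b - s • u)
  rw [show b - s • u - a = (b - a) - s • u by abel, inner_sub_right, real_inner_smul_right] at h₁
  rw [sub_sub_cancel_left, inner_neg_right, real_inner_smul_right, norm_neg, norm_smul,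
    Real.norm_eq_abs, mul_pow, sq_abs] at h₂
  have hu : s * ⟪g b, u⟫ - s * ⟪g a, u⟫ = s * ‖u‖ ^ 2 := by
    rw [← mul_sub, ← inner_sub_left, real_inner_self_eq_norm_sq]
  linarith

theorem two_mul_sub_mul_sq_mul_norm_sq_le_inner
    (hconv : ∀ a b, G a + ⟪g a, b - a⟫ ≤ G b)
    (hupper : ∀ a b, G b ≤ G a + ⟪g a, b - a⟫ + K / 2 * ‖b - a‖ ^ 2) (s : ℝ) (a b : E) :
    (2 * s - K * s ^ 2) * ‖g a - g b‖ ^ 2 ≤ ⟪g a - g b, a - b⟫ := by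
  have hab := add_inner_add_mul_norm_sq_le hconv hupper s a b
  have hba := add_inner_add_mul_norm_sq_le hconv hupper s b a
  have hinner : ⟪g a, b - a⟫ + ⟪g b, a - b⟫ = -⟪g a - g b, a - b⟫ := by
    rw [show b - a = -(a - b) by abel, inner_neg_right, inner_sub_left]; ring
  rw [norm_sub_rev] at hab
  linarith

theorem norm_sq_le_mul_inner_of_convex_of_upper
    (hconv : ∀ a b, G a + ⟪g a, b - a⟫ ≤ G b)
    (hupper : ∀ a b, G b ≤ G a + ⟪g a, b - a⟫ + K / 2 * ‖b - a‖ ^ 2) (hK : 0 ≤ K) (a b : E) :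
    ‖g a - g b‖ ^ 2 ≤ K * ⟪g a - g b, a - b⟫ :=
  le_mul_of_forall_two_mul_sub_mul_sq_mul_le hK
    fun s => two_mul_sub_mul_sq_mul_norm_sq_le_inner hconv hupper s a b

end Cocoercive

section Gradient

variable {E : Type*} [NormedAddCommGroup E] [InnerProductSpace ℝ E] [CompleteSpace E]

theorem gradient_fun_sum {ι : Type*} (s : Finset ι) {f : ι → E → ℝ} {x : E}
    (hf : ∀ i ∈ s, DifferentiableAt ℝ (f i) x) :
    gradient (fun y => ∑ i ∈ s, f i y) x = ∑ i ∈ s, gradient (f i) x := by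
  simp [gradient, fderiv_fun_sum hf, map_sum]

theorem descent_lemma {F : E → ℝ} (hF : Differentiable ℝ F) {L : ℝ}
    (hL : ∀ x y, ‖gradient F x - gradient F y‖ ≤ L * ‖x - y‖) (x y : E) :
    F y ≤ F x + ⟪gradient F x, y - x⟫ + L / 2 * ‖y - x‖ ^ 2 := by
  set v := y - x
  let φ : ℝ → ℝ := fun t => F (x + t • v) - t * ⟪gradient F x, v⟫ - L / 2 * t ^ 2 * ‖v‖ ^ 2
  have hφ : ∀ t, HasDerivAt φ (⟪gradient F (x + t • v) - gradient F x, v⟫ - L * t * ‖v‖ ^ 2) t := by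
    intro t
    have hline : HasDerivAt (fun t : ℝ => x + t • v) v t := by
      simpa using ((hasDerivAt_id t).smul_const v).const_add x
    have := (((hF _).hasGradientAt.hasFDerivAt.comp_hasDerivAt t hline).sub
      ((hasDerivAt_id t).mul_const ⟪gradient F x, v⟫)).sub
      (((hasDerivAt_pow 2 t).const_mul (L / 2)).mul_const (‖v‖ ^ 2))
    refine this.congr_deriv ?_
    rw [inner_sub_left, InnerProductSpace.toDual_apply_apply]
    ring
  have hanti : AntitoneOn φ (Set.Icc 0 1) := by
    refine antitoneOn_of_hasDerivWithinAt_nonpos (convex_Icc 0 1)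
      (HasDerivAt.continuousOn fun t _ => hφ t) (fun t _ => (hφ t).hasDerivWithinAt) ?_
    intro t ht
    rw [interior_Icc] at ht
    have hgrad : ‖gradient F (x + t • v) - gradient F x‖ ≤ L * t * ‖v‖ := by
      simpa [norm_smul, abs_of_pos ht.1, mul_assoc] using hL (x + t • v) x
    calc ⟪gradient F (x + t • v) - gradient F x, v⟫ - L * t * ‖v‖ ^ 2
        ≤ ‖gradient F (x + t • v) - gradient F x‖ * ‖v‖ - L * t * ‖v‖ ^ 2 := by
          gcongr; exact real_inner_le_norm _ _
      _ ≤ L * t * ‖v‖ * ‖v‖ - L * t * ‖v‖ ^ 2 := by gcongr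
      _ = 0 := by ring
  have hφ₁₀ := hanti (by simp) (by simp) zero_le_one
  simp only [φ, zero_smul, one_smul, add_zero, v, add_sub_cancel] at hφ₁₀
  linarith

theorem norm_gradient_step_sub_le {F : E → ℝ} {μ L η : ℝ}
    (hstrong : ∀ x y, F x + ⟪gradient F x, y - x⟫ + μ / 2 * ‖y - x‖ ^ 2 ≤ F y)
    (hupper : ∀ x y, F y ≤ F x + ⟪gradient F x, y - x⟫ + L / 2 * ‖y - x‖ ^ 2)
    (hμL : μ ≤ L) (hη : 0 ≤ η) (hηL : η * (μ + L) ≤ 2) (a b : E) :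
    ‖(a - η • gradient F a) - (b - η • gradient F b)‖ ≤ (1 - η * μ) * ‖a - b‖ := by
  set g : E → E := fun w => gradient F w - μ • w
  have hsq : ∀ x y : E, μ / 2 * ‖y‖ ^ 2 =
      μ / 2 * ‖x‖ ^ 2 + μ * ⟪x, y - x⟫ + μ / 2 * ‖y - x‖ ^ 2 := by
    intro x y
    rw [← add_sub_cancel x y, norm_add_sq_real, add_sub_cancel_left]
    ring
  have hg : ∀ x y : E, ⟪g x, y - x⟫ = ⟪gradient F x, y - x⟫ - μ * ⟪x, y - x⟫ := by
    intro x y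
    rw [inner_sub_left, real_inner_smul_left]
  have hconv : ∀ x y, (F x - μ / 2 * ‖x‖ ^ 2) + ⟪g x, y - x⟫ ≤ F y - μ / 2 * ‖y‖ ^ 2 := by
    intro x y
    linarith [hstrong x y, hsq x y, hg x y]
  have hupperG : ∀ x y, F y - μ / 2 * ‖y‖ ^ 2 ≤
      (F x - μ / 2 * ‖x‖ ^ 2) + ⟪g x, y - x⟫ + (L - μ) / 2 * ‖y - x‖ ^ 2 := by
    intro x y
    linarith [hupper x y, hsq x y, hg x y]
  set u := g a - g b
  set d := a - b
  have hmono : 0 ≤ ⟪u, d⟫ := by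
    simpa using two_mul_sub_mul_sq_mul_norm_sq_le_inner hconv hupperG 0 a b
  have hcoco : ‖u‖ ^ 2 ≤ (L - μ) * ⟪u, d⟫ :=
    norm_sq_le_mul_inner_of_convex_of_upper hconv hupperG (sub_nonneg.2 hμL) a b
  have hρ : 0 ≤ 1 - η * μ := by nlinarith
  have hstep : (a - η • gradient F a) - (b - η • gradient F b) = (1 - η * μ) • d - η • u := by
    simp only [u, d, g]
    module
  -- the contraction reduces to `η ‖u‖² ≤ 2 (1 - η μ) ⟪u, d⟫`, i.e. to `η (L - μ) ≤ 2 (1 - η μ)`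
  rw [hstep, ← sq_le_sq₀ (norm_nonneg _) (mul_nonneg hρ (norm_nonneg _)), norm_sub_sq_real,
    norm_smul, norm_smul, real_inner_smul_left, real_inner_smul_right, real_inner_comm,
    Real.norm_eq_abs, Real.norm_eq_abs, abs_of_nonneg hρ, abs_of_nonneg hη]
  nlinarith [mul_le_mul_of_nonneg_left hcoco (mul_nonneg hη hη),
    mul_nonneg (mul_nonneg hη hmono) (show 0 ≤ 2 - η * (μ + L) by linarith)]

end Gradient

section Normed

variable {E : Type*} [NormedAddCommGroup E]

theorem norm_sum_sub_le_of_lipschitz {ι F' : Type*} [SeminormedAddCommGroup F'] (s : Finset ι)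
    {g : ι → E → F'} {K : ι → ℝ} (hg : ∀ i x y, ‖g i x - g i y‖ ≤ K i * ‖x - y‖)
    (hK : 0 ≤ ∑ i ∈ s, K i) {r : ℝ} (hr : 0 ≤ r) {a : E} {b : ι → E}
    (hb : ∀ i, ‖b i - a‖ ≤ r) :
    ‖∑ i ∈ s, (g i a - g i (b i))‖ ≤ (∑ i ∈ s, K i) * r := by
  -- on a trivial space the constants `K i` may be negative
  rcases subsingleton_or_nontrivial E with hE | hE
  · rw [Finset.sum_eq_zero fun i _ => by rw [Subsingleton.elim (b i) a, sub_self], norm_zero]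
    exact mul_nonneg hK hr
  obtain ⟨v, hv⟩ := exists_ne (0 : E)
  have hK₀ : ∀ i, 0 ≤ K i := fun i =>
    nonneg_of_mul_nonneg_left ((norm_nonneg _).trans (hg i v 0)) (norm_pos_iff.2 (by simpa))
  calc ‖∑ i ∈ s, (g i a - g i (b i))‖ ≤ ∑ i ∈ s, ‖g i a - g i (b i)‖ := norm_sum_le _ _
    _ ≤ ∑ i ∈ s, K i * r := Finset.sum_le_sum fun i _ =>
        (hg i a (b i)).trans (mul_le_mul_of_nonneg_left (norm_sub_rev a (b i) ▸ hb i) (hK₀ i))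
    _ = (∑ i ∈ s, K i) * r := (Finset.sum_mul _ _ _).symm

theorem norm_perturbed_step_sub_le [NormedSpace ℝ E] {a c v w e : E} {η ρ δ ε : ℝ} (hη : 0 ≤ η)
    (hcontr : ‖(a - η • v) - c‖ ≤ ρ * ‖a - c‖) (hvw : ‖v - w‖ ≤ δ) (he : ‖e‖ ≤ ε) :
    ‖(a - η • w + e) - c‖ ≤ ρ * ‖a - c‖ + η * δ + ε := by
  have hdecomp : a - η • w + e - c = (a - η • v - c) + η • (v - w) + e := by module
  rw [hdecomp]
  refine norm_add₃_le.trans ?_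
  rw [norm_smul, Real.norm_of_nonneg hη]
  gcongr

end Normed

theorem limsup_le_div_one_sub_of_le_mul_add {r : ℕ → ℝ} {ρ b : ℝ}
    (hr : IsBoundedUnder (· ≥ ·) atTop r) (hρ₀ : 0 ≤ ρ) (hρ₁ : ρ < 1)
    (hrec : ∀ k, r (k + 1) ≤ ρ * r k + b) :
    limsup r atTop ≤ b / (1 - ρ) := by
  set c := b / (1 - ρ)
  have hc : ρ * c + b = c := by
    simp only [c]
    field_simp [(sub_pos.2 hρ₁).ne']
    ring
  have hle : ∀ k, r k ≤ ρ ^ k * (r 0 - c) + c := by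
    intro k
    induction k with
    | zero => simp
    | succ k ih => linear_combination hrec k + mul_le_mul_of_nonneg_left ih hρ₀ + hc
  have htend : Tendsto (fun k => ρ ^ k * (r 0 - c) + c) atTop (nhds c) := by
    simpa using ((tendsto_pow_atTop_nhds_zero_of_lt_one hρ₀ hρ₁).mul_const (r 0 - c)).add_const c
  calc limsup r atTop ≤ limsup (fun k => ρ ^ k * (r 0 - c) + c) atTop :=
        limsup_le_limsup (Eventually.of_forall hle) hr.isCoboundedUnder_le htend.isBoundedUnder_le
    _ = c := htend.limsup_eq

theorem quantized_gradient_descent_limsup_bound_general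
    {E : Type*} [NormedAddCommGroup E] [InnerProductSpace ℝ E] [CompleteSpace E]
    (n : ℕ) (hn : 1 ≤ n)
    (f : Fin n → E → ℝ) (Lloc : Fin n → ℝ)
    (hdiff : ∀ i, Differentiable ℝ (f i))
    (hsmoothloc : ∀ i, ∀ x y : E,
      ‖gradient (f i) x - gradient (f i) y‖ ≤ Lloc i * ‖x - y‖)
    (L μ : ℝ) (hL : L = ∑ i, Lloc i)
    (hμ0 : 0 < μ) (hμL : μ ≤ L)
    (F : E → ℝ) (hF : F = fun y => ∑ i, f i y)
    (hstrong : ∀ x y : E,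
      F y ≥ F x + ⟪gradient F x, y - x⟫ + (μ / 2) * ‖y - x‖ ^ 2)
    (hsmooth : ∀ x y : E, ‖gradient F x - gradient F y‖ ≤ L * ‖x - y‖)
    (xstar : E) (hxstar : gradient F xstar = 0)
    (Δ : ℝ) (hΔ : 0 ≤ Δ)
    (α : ℝ) (hα0 : 0 < α) (hα : α ≤ 2 * n / (μ + L))
    (xhat : ℕ → E) (x : Fin n → ℕ → E) (e : ℕ → E)
    (hrec : ∀ k, xhat (k + 1) = xhat k - (α / n) • (∑ i, gradient (f i) (x i k)) + e (k + 1))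
    (he : ∀ k, ‖e (k + 1)‖ ≤ 2 * Δ)
    (hx : ∀ k, ∀ i, ‖x i k - xhat k‖ ≤ 4 * Δ) :
    Filter.limsup (fun k => ‖xhat k - xstar‖) Filter.atTop ≤
      (n / (α * μ)) * ((4 * α * L / n + 2) * Δ) := by
  have hn₀ : (0 : ℝ) < n := by exact_mod_cast hn
  set η := α / n
  have hη : 0 < η := div_pos hα0 hn₀
  have hηL : η * (μ + L) ≤ 2 := by
    rw [le_div_iff₀ (by linarith)] at hα
    rw [div_mul_eq_mul_div, div_le_iff₀ hn₀]
    linarith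
  have hFdiff : Differentiable ℝ F := hF ▸ fun z => DifferentiableAt.fun_sum fun i _ => hdiff i z
  have hgradF : ∀ z, gradient F z = ∑ i, gradient (f i) z := fun z =>
    hF ▸ gradient_fun_sum _ fun i _ => (hdiff i).differentiableAt
  have hcontr := norm_gradient_step_sub_le hstrong (descent_lemma hFdiff hsmooth) hμL hη.le hηL
  have hstep : ∀ k, ‖xhat (k + 1) - xstar‖ ≤
      (1 - η * μ) * ‖xhat k - xstar‖ + (η * (L * (4 * Δ)) + 2 * Δ) := by
    intro k
    have hgrad : ‖gradient F (xhat k) - ∑ i, gradient (f i) (x i k)‖ ≤ L * (4 * Δ) := by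
      rw [hgradF, ← Finset.sum_sub_distrib, hL]
      exact norm_sum_sub_le_of_lipschitz _ hsmoothloc (by linarith) (by linarith) (hx k)
    rw [hrec, ← add_assoc]
    refine norm_perturbed_step_sub_le hη.le ?_ hgrad (he k)
    simpa [hxstar] using hcontr (xhat k) xstar
  have hρ₀ : 0 ≤ 1 - η * μ := by nlinarith [mul_le_mul_of_nonneg_left hμL hη.le]
  have hρ₁ : 1 - η * μ < 1 := by linarith [mul_pos hη hμ0]
  have hlimsup := limsup_le_div_one_sub_of_le_mul_add
    (isBoundedUnder_of ⟨0, fun k => norm_nonneg (xhat k - xstar)⟩) hρ₀ hρ₁ hstep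
  convert hlimsup using 1
  simp only [η]
  field_simp
  ring

/-- The iterates of quantized averaged gradient descent converge to a neighborhood of
the optimal solution of radius `(n/(αμ))·(4αL/n + 2)·Δ`. -/
theorem quantized_gradient_descent_limsup_bound
    {E : Type*} [NormedAddCommGroup E] [InnerProductSpace ℝ E] [CompleteSpace E]
    (n : ℕ) (hn : 1 ≤ n)
    (f : Fin n → E → ℝ) (μloc Lloc : Fin n → ℝ)
    (hdiff : ∀ i, Differentiable ℝ (f i))
    (hμloc : ∀ i, 0 < μloc i)
    (hstrongloc : ∀ i, ∀ x y : E,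
      f i y ≥ f i x + ⟪gradient (f i) x, y - x⟫ + (μloc i / 2) * ‖y - x‖ ^ 2)
    (hsmoothloc : ∀ i, ∀ x y : E,
      ‖gradient (f i) x - gradient (f i) y‖ ≤ Lloc i * ‖x - y‖)
    (L μ : ℝ) (hL : L = ∑ i, Lloc i) (hμ : μ = ⨅ i, μloc i)
    (hμ0 : 0 < μ) (hμL : μ ≤ L)
    (F : E → ℝ) (hF : F = fun y => ∑ i, f i y)
    (hstrong : ∀ x y : E,
      F y ≥ F x + ⟪gradient F x, y - x⟫ + (μ / 2) * ‖y - x‖ ^ 2)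
    (hsmooth : ∀ x y : E, ‖gradient F x - gradient F y‖ ≤ L * ‖x - y‖)
    (xstar : E) (hxstar : gradient F xstar = 0)
    (Δ : ℝ) (hΔ : 0 ≤ Δ)
    (α : ℝ) (hα0 : 0 < α) (hα : α ≤ 2 * n / (μ + L))
    (xhat : ℕ → E) (x : Fin n → ℕ → E) (e : ℕ → E)
    (hrec : ∀ k, xhat (k + 1) = xhat k - (α / n) • (∑ i, gradient (f i) (x i k)) + e (k + 1))
    (he : ∀ k, ‖e (k + 1)‖ ≤ 2 * Δ)
    (hx : ∀ k, ∀ i, ‖x i k - xhat k‖ ≤ 4 * Δ) :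
    Filter.limsup (fun k => ‖xhat k - xstar‖) Filter.atTop ≤
      (n / (α * μ)) * ((4 * α * L / n + 2) * Δ) :=
  quantized_gradient_descent_limsup_bound_general n hn f Lloc hdiff hsmoothloc L μ hL hμ0 hμL F hF
    hstrong hsmooth xstar hxstar Δ hΔ α hα0 hα xhat x e hrec he hx
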